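/- Let R be a Noetherian local domain and let 𝓘 = {I_n} be a discrete valued filtration of R. Then the Rees algebra R[𝓘] = ⊕_{n≥0} I_n t^n is integrally closed in the polynomial ring R[t], i.e., \overline{R[𝓘]} = R[𝓘]. -/

import Mathlib

set_option synthInstance.maxHeartbeats 1000000
set_option maxHeartbeats 1000000

open Filter Polynomial IsLocalRing

/-- The length `ℓ_R(M)` of an `R`-module `M`, as a real number.  (The length of a module
equals the Krull dimension of its lattice of submodules; modules of infinite length are
sent to `0`.) -/
noncomputable def mlen (R M : Type*) [CommRing R] [AddCommGroup M] [Module R M] : ℝ :=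
  (((Order.krullDim (Submodule R M)).unbotD 0).untopD 0 : ℕ)

/-- `ℓ_R(R/I)`, as a real number. -/
noncomputable def colen (R : Type*) [CommRing R] (I : Ideal R) : ℝ := mlen R (R ⧸ I)

/-- The valuation ideal `I(ν)_n = 𝔪_ν ^ n ∩ R` attached to a local subring `𝒪_ν` of the
fraction field of `R` containing `R`. -/
noncomputable def valIdeal {R : Type*} [CommRing R] [IsDomain R]
    (O : Subring (FractionRing R)) (hloc : IsLocalRing O)
    (hsub : ∀ x : R, algebraMap R (FractionRing R) x ∈ O) (n : ℕ) : Ideal R :=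
  Ideal.comap ((algebraMap R (FractionRing R)).codRestrict O hsub)
    (@IsLocalRing.maximalIdeal O _ hloc ^ n)

/-- The Rees algebra `⊕ₙ Iₙ tⁿ ⊆ R[t]` of a filtration of ideals `I`. -/
noncomputable def reesAlg {R : Type*} [CommRing R] (I : ℕ → Ideal R) :
    Subalgebra R (Polynomial R) :=
  Algebra.adjoin R {p : Polynomial R | ∃ n : ℕ, ∃ x ∈ I n, p = Polynomial.C x * Polynomial.X ^ n}

/-!
The ideal `I(ν)_{⌈n a⌉}` consists of the `x` with `|x|_ν ⬝ (2 ^ a) ^ n ≤ 1`, where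
`|x|_ν = 2 ^ (-ν x)`. Hence a polynomial lies in `R[𝓘]` iff, for every `i`, its Gauss norm
with respect to `|·|_{ν_i}` and radius `2 ^ a_i` is at most one. The Gauss norm of a
nonarchimedean absolute value is multiplicative, so it is a valuation on `R[t]`, and the ring of
integers of a valuation is integrally closed; so integrality over `R[𝓘]` preserves these bounds.
-/

open scoped NNReal

section GaussValuation

variable {R : Type*} [CommRing R] [IsDomain R]

noncomputable def AbsoluteValue.gaussValuation (v : AbsoluteValue R ℝ)
    (hna : IsNonarchimedean v) {c : ℝ} (hc : 0 < c) : Valuation R[X] ℝ≥0 where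
  toFun p := ⟨p.gaussNorm v c, p.gaussNorm_nonneg v hc.le⟩
  map_zero' := Subtype.ext (Polynomial.gaussNorm_zero v c)
  map_one' := Subtype.ext <| by
    rw [← Polynomial.C_1]
    exact (Polynomial.gaussNorm_C v c 1).trans v.map_one
  map_mul' p q := by ext; exact Polynomial.gaussNorm_mul hna hc p q
  map_add_le_max' p q := Polynomial.isNonarchimedean_gaussNorm v hna hc.le p q

theorem AbsoluteValue.gaussValuation_le_one_iff {v : AbsoluteValue R ℝ}
    (hna : IsNonarchimedean v) {c : ℝ} (hc : 0 < c) (p : R[X]) :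
    v.gaussValuation hna hc p ≤ 1 ↔ ∀ n, v (p.coeff n) * c ^ n ≤ 1 := by
  rw [← NNReal.coe_le_coe]
  refine ⟨fun h n => (p.le_gaussNorm v hc.le n).trans h, fun h => ?_⟩
  show p.gaussNorm v c ≤ 1
  unfold Polynomial.gaussNorm
  split_ifs with hp
  · exact Finset.sup'_le _ _ fun n _ => h n
  · exact zero_le_one

end GaussValuation

theorem Valuation.map_le_one_of_isIntegralElem {A B Γ₀ : Type*} [CommRing A] [CommRing B]
    [LinearOrderedCommGroupWithZero Γ₀] (w : Valuation A Γ₀) (f : B →+* A)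
    (hf : ∀ b, w (f b) ≤ 1) {x : A} (hx : f.IsIntegralElem x) : w x ≤ 1 := by
  obtain ⟨q, hq, hqx⟩ := hx
  have : IsIntegral w.integer x :=
    ⟨q.map (f.codRestrict w.integer hf), hq.map _, by rwa [Polynomial.eval₂_map]⟩
  exact (Valuation.integer.integers w).isIntegral_iff_v_le_one.mp this

section Rees

variable {R ι : Type*} [CommRing R] [IsDomain R] {v : ι → AbsoluteValue R ℝ}
  (hna : ∀ i, IsNonarchimedean (v i)) {c : ι → ℝ} (hc : ∀ i, 0 < c i)

include hna hc in
theorem mem_reesAlg_iff_forall_gaussValuation_le_one (hv : ∀ i x, v i x ≤ 1) {I : ℕ → Ideal R}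
    (hI : ∀ n x, x ∈ I n ↔ ∀ i, v i x * c i ^ n ≤ 1) (p : R[X]) :
    p ∈ reesAlg I ↔ ∀ i, (v i).gaussValuation (hna i) (hc i) p ≤ 1 := by
  constructor
  · intro hp i
    induction hp using Algebra.adjoin_induction with
    | mem q hq =>
      obtain ⟨n, x, hx, rfl⟩ := hq
      rw [AbsoluteValue.gaussValuation_le_one_iff]
      intro k
      rw [Polynomial.coeff_C_mul_X_pow]
      split_ifs with hk
      · exact hk ▸ (hI n x).mp hx i
      · simp
    | algebraMap r =>
      rw [AbsoluteValue.gaussValuation_le_one_iff]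
      intro k
      rw [Polynomial.algebraMap_apply, Polynomial.coeff_C]
      split_ifs with hk
      · simpa [hk] using hv i r
      · simp
    | add p q _ _ hp hq => exact ((Valuation.map_add _ p q).trans (max_le hp hq))
    | mul p q _ _ hp hq => exact (Valuation.map_mul _ p q).trans_le (mul_le_one' hp hq)
  · intro hp
    simp only [AbsoluteValue.gaussValuation_le_one_iff] at hp
    rw [p.as_sum_support]
    exact Subalgebra.sum_mem _ fun n _ => Algebra.subset_adjoin
      ⟨n, p.coeff n, (hI n _).mpr fun i => hp i n, Polynomial.C_mul_X_pow_eq_monomial.symm⟩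

include hna hc in
theorem isIntegralElem_reesAlg_iff (hv : ∀ i x, v i x ≤ 1) {I : ℕ → Ideal R}
    (hI : ∀ n x, x ∈ I n ↔ ∀ i, v i x * c i ^ n ≤ 1) (p : R[X]) :
    (reesAlg I).val.toRingHom.IsIntegralElem p ↔ p ∈ reesAlg I := by
  refine ⟨fun hp => ?_, fun hp => (reesAlg I).val.toRingHom.isIntegralElem_map (x := ⟨p, hp⟩)⟩
  rw [mem_reesAlg_iff_forall_gaussValuation_le_one hna hc hv hI]
  exact fun i => Valuation.map_le_one_of_isIntegralElem _ (reesAlg I).val.toRingHom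
    (fun q => (mem_reesAlg_iff_forall_gaussValuation_le_one hna hc hv hI q).mp q.2 i) hp

end Rees

open IsDedekindDomain.HeightOneSpectrum in
theorem IsDiscreteValuationRing.mem_maximalIdeal_pow_ceil_iff {A : Type*} [CommRing A]
    [IsDomain A] [IsDiscreteValuationRing A] {b : ℝ≥0} (hb : 1 < b) (x : A) (c : ℝ) :
    x ∈ IsLocalRing.maximalIdeal A ^ ⌈c⌉₊ ↔
      (maximalIdeal A).intAdicAbv hb x * (b : ℝ) ^ c ≤ 1 := by
  rcases eq_or_ne x 0 with rfl | hx
  · simp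
  obtain ⟨k, hval⟩ : ∃ k : ℕ, (maximalIdeal A).intValuation x = WithZero.exp (-(k : ℤ)) :=
    ⟨_, (maximalIdeal A).intValuation_if_neg hx⟩
  have habv : (maximalIdeal A).intAdicAbv hb x = (b : ℝ) ^ (-(k : ℝ)) := by
    simp [intAdicAbv, intAdicAbvDef, hval, WithZeroMulInt.toNNReal_neg_apply,
      WithZero.exp_eq_coe_ofAdd]
  have hb' : (1 : ℝ) < b := hb
  -- the valuation of `x` is an integer `k`, so `⌈c⌉₊ ≤ k ↔ c ≤ k`
  rw [show IsLocalRing.maximalIdeal A = (maximalIdeal A).asIdeal from rfl,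
    ← (maximalIdeal A).intValuation_le_pow_iff_mem, hval, WithZero.exp_le_exp, neg_le_neg_iff,
    Int.ofNat_le, Nat.ceil_le, habv, ← Real.rpow_add (by positivity), neg_add_eq_sub,
    ← Real.rpow_zero (b : ℝ), Real.rpow_le_rpow_left_iff hb', sub_nonpos]

section DiscreteValuationSubring

open IsDedekindDomain.HeightOneSpectrum

variable {R : Type*} [CommRing R] [IsDomain R] (O : Subring (FractionRing R))
  [IsDiscreteValuationRing O] (hsub : ∀ x : R, algebraMap R (FractionRing R) x ∈ O)

noncomputable def dvrAbv : AbsoluteValue R ℝ :=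
  ((IsDiscreteValuationRing.maximalIdeal O).intAdicAbv one_lt_two).comp
    (f := (algebraMap R (FractionRing R)).codRestrict O hsub)
    fun _ _ h => IsFractionRing.injective R (FractionRing R) (congrArg Subtype.val h)

theorem isNonarchimedean_dvrAbv : IsNonarchimedean (dvrAbv O hsub) := fun x y => by
  have h := isNonarchimedean_intAdicAbv (IsDiscreteValuationRing.maximalIdeal O) one_lt_two
    ((algebraMap R (FractionRing R)).codRestrict O hsub x)
    ((algebraMap R (FractionRing R)).codRestrict O hsub y)
  rwa [← map_add] at h

theorem dvrAbv_le_one (x : R) : dvrAbv O hsub x ≤ 1 :=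
  intAdicAbv_le_one _ one_lt_two _

theorem mem_valIdeal_ceil_iff (hloc : IsLocalRing O) (x : R) (n : ℕ) (a : ℝ) :
    x ∈ valIdeal O hloc hsub ⌈n * a⌉₊ ↔ dvrAbv O hsub x * ((2 : ℝ) ^ a) ^ n ≤ 1 := by
  rw [← Real.rpow_natCast, ← Real.rpow_mul zero_le_two, mul_comm a]
  exact IsDiscreteValuationRing.mem_maximalIdeal_pow_ceil_iff one_lt_two _ _

end DiscreteValuationSubring

theorem rees_algebra_of_discrete_valued_filtration_is_integrally_closed_general
    {R : Type*} [CommRing R] [IsDomain R]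
    (r : ℕ)
    (O : Fin r → Subring (FractionRing R))
    (hloc : ∀ i, IsLocalRing (O i))
    (hdvr : ∀ i, IsDiscreteValuationRing (O i))
    (hsub : ∀ i, ∀ x : R, algebraMap R (FractionRing R) x ∈ O i)
    (a : Fin r → ℝ)
    (I : ℕ → Ideal R)
    (hI : ∀ n : ℕ, I n = ⨅ i, valIdeal (O i) (hloc i) (hsub i) ⌈(n : ℝ) * a i⌉₊) :
    ∀ p : Polynomial R, (reesAlg I).val.toRingHom.IsIntegralElem p ↔ p ∈ reesAlg I := by
  have hI' : ∀ n x, x ∈ I n ↔ ∀ i, dvrAbv (O i) (hsub i) x * ((2 : ℝ) ^ a i) ^ n ≤ 1 := by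
    intro n x
    rw [hI, Ideal.mem_iInf]
    exact forall_congr' fun i => mem_valIdeal_ceil_iff (O i) (hsub i) (hloc i) x n (a i)
  exact isIntegralElem_reesAlg_iff (fun i => isNonarchimedean_dvrAbv (O i) (hsub i))
    (fun i => by positivity) (fun i => dvrAbv_le_one (O i) (hsub i)) hI'

theorem rees_algebra_of_discrete_valued_filtration_is_integrally_closed
    {R : Type*} [CommRing R] [IsDomain R] [IsNoetherianRing R] [IsLocalRing R]
    (r : ℕ) (hr : 0 < r)
    (O : Fin r → Subring (FractionRing R))
    (hloc : ∀ i, IsLocalRing (O i))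
    (hdvr : ∀ i, IsDiscreteValuationRing (O i))
    (hvr : ∀ i, ∀ x : FractionRing R, x ≠ 0 → x ∈ O i ∨ x⁻¹ ∈ O i)
    (hsub : ∀ i, ∀ x : R, algebraMap R (FractionRing R) x ∈ O i)
    (a : Fin r → ℝ) (ha : ∀ i, 0 < a i)
    (I : ℕ → Ideal R)
    (hI : ∀ n : ℕ, I n = ⨅ i, valIdeal (O i) (hloc i) (hsub i) ⌈(n : ℝ) * a i⌉₊) :
    ∀ p : Polynomial R, (reesAlg I).val.toRingHom.IsIntegralElem p ↔ p ∈ reesAlg I :=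
  rees_algebra_of_discrete_valued_filtration_is_integrally_closed_general r O hloc hdvr hsub a I hI
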